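/- arXiv:1102.4836 — 8 statements merged into one kernel-verified Lean document; each statement's English description precedes it below -/
import Mathlib

section
/- Let k_0, k_1, ... be non-negative integers. Define A_j by A_0 = 1, A_1 = 2 + k_0, A_j = A_{j-2} + (1+k_{j-1})A_{j-1}; define the shifted sequence A^{+1}_j by A^{+1}_0 = 1, A^{+1}_1 = 2 + k_1, A^{+1}_j = A^{+1}_{j-2} + (1+k_j)A^{+1}_{j-1}; and define Ā^{+1}_j identically to A^{+1}_j but with k_1 replaced by k_1 - 1 (assuming k_1 ≥ 1). Then A^{+1}_j + (1 + k_0)·Ā^{+1}_j = A_{j+1} for all j ≥ 0. -/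
def Aseq (k : ℕ → ℕ) : ℕ → ℕ
  | 0 => 1
  | 1 => 2 + k 0
  | (j+2) => Aseq k j + (1 + k (j+1)) * Aseq k (j+1)

/-- Lemma `key`: with `A⁺¹` built from `(k₁, k₂, …)` and `Ā⁺¹` built from
`(k₁ - 1, k₂, …)` (assuming `k₁ ≥ 1`), one has `A⁺¹ⱼ + (1 + k₀)·Ā⁺¹ⱼ = A_{j+1}`. -/
theorem lemma_key (k : ℕ → ℕ) (hk : 1 ≤ k 1) :
    ∀ j : ℕ,
      Aseq (fun i => k (i+1)) j
        + (1 + k 0) * Aseq (fun i => if i = 0 then k 1 - 1 else k (i+1)) j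
      = Aseq k (j+1) := by
  intro j
  induction j using Nat.strong_induction_on with
  | _ j ih =>
    match j with
    | 0 => simp [Aseq]; ring
    | 1 =>
      show (2 + k 1) + (1 + k 0) * (2 + (k 1 - 1)) = 1 + (1 + k 1) * (2 + k 0)
      have : k 1 - 1 + 1 = k 1 := Nat.sub_add_cancel hk
      nlinarith [this]
    | (j+2) =>
      have h1 := ih j (by omega)
      have h2 := ih (j+1) (by omega)
      have hne : j + 1 ≠ 0 := by omega
      show _ + _ * (Aseq _ j + (1 + (if j+1 = 0 then k 1 - 1 else k (j+1+1))) * Aseq _ (j+1)) = _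
      simp only [if_neg hne]
      show Aseq (fun i => k (i+1)) j + (1 + k (j+2)) * Aseq (fun i => k (i+1)) (j+1)
          + (1 + k 0) * (Aseq (fun i => if i = 0 then k 1 - 1 else k (i+1)) j
            + (1 + k (j+2)) * Aseq (fun i => if i = 0 then k 1 - 1 else k (i+1)) (j+1))
          = Aseq k (j+1) + (1 + k (j+2)) * Aseq k (j+2)
      rw [← h1, ← h2]
      ring
end

section
/- Let k_0, k_1, ... be non-negative integers with k_1 = 0. Define the A-type sequences A (from parameters k_0, k_1, ...), A^{+1} (from parameters k_1, k_2, ...), and A^{+2} (from parameters k_2, k_3, ...), each by X_0 = 1, X_1 = 2 + (first parameter), X_j = X_{j-2} + (1 + (j-th parameter))·X_{j-1}. Then A^{+1}_j + (1 + k_0)·A^{+2}_{j-1} = A_{j+1} for all j ≥ 1. -/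
/-- Lemma `key_bis`: when `k₁ = 0`, `A⁺¹ⱼ + (1 + k₀)·A⁺²_{j-1} = A_{j+1}` for `j ≥ 1`. -/
theorem lemma_key_bis (k : ℕ → ℕ) (hk : k 1 = 0) :
    ∀ j : ℕ, 1 ≤ j →
      Aseq (fun i => k (i+1)) j + (1 + k 0) * Aseq (fun i => k (i+2)) (j-1)
      = Aseq k (j+1) := by
  intro j
  induction j using Nat.strong_induction_on with
  | _ j ih =>
    intro hj
    match j, hj with
    | 1, _ => simp [Aseq, hk]; ring
    | 2, _ => simp [Aseq, hk]; ring
    | (m+3), _ =>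
      have h1 := ih (m+1) (by omega) (by omega)
      have h2 := ih (m+2) (by omega) (by omega)
      simp only [Nat.add_sub_cancel] at h1 h2 ⊢
      show Aseq (fun i => k (i+1)) (m+1) + (1 + k (m+3)) * Aseq (fun i => k (i+1)) (m+2)
          + (1 + k 0) * (Aseq (fun i => k (i+2)) m + (1 + k (m+3)) * Aseq (fun i => k (i+2)) (m+1))
          = Aseq k (m+2) + (1 + k (m+3)) * Aseq k (m+3)
      simp only [show m+2-1 = m+1 from rfl] at h2
      rw [← h1, ← h2]; ring
end

section
/- The number of words of length r ≥ 2 over the alphabet {G, S, T} that begin with the two letters G G and contain no occurrence of the factor G T equals F_{2r-3}, the (2r-3)-rd Fibonacci number (F_1 = F_2 = 1). -/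
inductive Letter : Type
  | G | S | T
  deriving DecidableEq

/-- A word over `{G, S, T}` is admissible if it starts with `GG` and
contains no factor `GT`. -/
def Admissible (w : List Letter) : Prop :=
  (∃ rest, w = Letter.G :: Letter.G :: rest) ∧
    w.Chain' (fun a b => ¬(a = Letter.G ∧ b = Letter.T))

instance : Fintype Letter :=
  ⟨{Letter.G, Letter.S, Letter.T}, by intro a; cases a <;> simp⟩

namespace CardAdm

lemma fib_rec (a : ℕ) : Nat.fib (a + 2) = Nat.fib a + Nat.fib (a + 1) := Nat.fib_add_two

/-- No factor `GT`. -/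
def NoGT (w : List Letter) : Prop :=
  w.Chain' (fun a b => ¬(a = Letter.G ∧ b = Letter.T))

instance (Q : List Letter → Prop) (n : ℕ) :
    Finite {w : List Letter // w.length = n ∧ Q w} := by
  haveI : Finite {l : List Letter // l.length = n} :=
    inferInstanceAs (Finite (List.Vector Letter n))
  apply Finite.of_injective (fun w : {w : List Letter // w.length = n ∧ Q w} =>
    (⟨w.1, w.2.1⟩ : List.Vector Letter n))
  intro a b h
  simp only [Subtype.mk.injEq] at h
  exact Subtype.ext h

lemma noGT_nil : NoGT [] := List.isChain_nil

lemma noGT_cons (a : Letter) (t : List Letter) :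
    NoGT (a :: t) ↔ (∀ b ∈ t.head?, ¬(a = Letter.G ∧ b = Letter.T)) ∧ NoGT t :=
  List.isChain_cons

lemma noGT_G_cons (t : List Letter) :
    NoGT (Letter.G :: t) ↔ t.head? ≠ some Letter.T ∧ NoGT t := by
  rw [noGT_cons]
  cases h : t.head? with
  | none => simp
  | some b => cases b <;> simp

lemma noGT_S_cons (t : List Letter) : NoGT (Letter.S :: t) ↔ NoGT t := by
  rw [noGT_cons]; simp

lemma noGT_T_cons (t : List Letter) : NoGT (Letter.T :: t) ↔ NoGT t := by
  rw [noGT_cons]; simp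

/-- Split a set of words of length `n+1` by the first letter. -/
def splitEquiv (Q : List Letter → Prop) (n : ℕ) :
    {w : List Letter // w.length = n + 1 ∧ Q w} ≃
      ({t : List Letter // t.length = n ∧ Q (Letter.G :: t)} ⊕
        ({t : List Letter // t.length = n ∧ Q (Letter.S :: t)} ⊕
          {t : List Letter // t.length = n ∧ Q (Letter.T :: t)})) where
  toFun w :=
    match w with
    | ⟨[], h⟩ => absurd h.1 (by simp)
    | ⟨Letter.G :: t, h⟩ => Sum.inl ⟨t, by simpa using h.1, h.2⟩
    | ⟨Letter.S :: t, h⟩ => Sum.inr (Sum.inl ⟨t, by simpa using h.1, h.2⟩)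
    | ⟨Letter.T :: t, h⟩ => Sum.inr (Sum.inr ⟨t, by simpa using h.1, h.2⟩)
  invFun x :=
    match x with
    | Sum.inl ⟨t, h⟩ => ⟨Letter.G :: t, by simp [h.1], h.2⟩
    | Sum.inr (Sum.inl ⟨t, h⟩) => ⟨Letter.S :: t, by simp [h.1], h.2⟩
    | Sum.inr (Sum.inr ⟨t, h⟩) => ⟨Letter.T :: t, by simp [h.1], h.2⟩
  left_inv w := by
    rcases w with ⟨_ | ⟨a, t⟩, h⟩
    · simp at h
    · cases a <;> rfl
  right_inv x := by
    rcases x with ⟨t, h⟩ | (⟨t, h⟩ | ⟨t, h⟩) <;> rfl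

lemma main (n : ℕ) :
    Nat.card {w : List Letter // w.length = n ∧ NoGT w ∧ w.head? ≠ some Letter.T}
        = Nat.fib (2 * n + 1) ∧
      Nat.card {w : List Letter // w.length = n ∧ NoGT w} = Nat.fib (2 * n + 2) := by
  induction n with
  | zero =>
    constructor
    · haveI : Unique {w : List Letter // w.length = 0 ∧ NoGT w ∧ w.head? ≠ some Letter.T} :=
        { default := ⟨[], rfl, noGT_nil, by simp⟩
          uniq := by rintro ⟨w, hw, -⟩; exact Subtype.ext (List.length_eq_zero_iff.mp hw) }
      rw [Nat.card_unique]; decide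
    · haveI : Unique {w : List Letter // w.length = 0 ∧ NoGT w} :=
        { default := ⟨[], rfl, noGT_nil⟩
          uniq := by rintro ⟨w, hw, -⟩; exact Subtype.ext (List.length_eq_zero_iff.mp hw) }
      rw [Nat.card_unique]; decide
  | succ n ih =>
    obtain ⟨ihG, ihH⟩ := ih
    have hG : Nat.card {w : List Letter //
        w.length = n + 1 ∧ NoGT w ∧ w.head? ≠ some Letter.T} = Nat.fib (2 * n + 3) := by
      rw [Nat.card_congr (splitEquiv (fun w => NoGT w ∧ w.head? ≠ some Letter.T) n),
        Nat.card_sum, Nat.card_sum]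
      have e1 : Nat.card {t : List Letter //
          t.length = n ∧ NoGT (Letter.G :: t) ∧ (Letter.G :: t).head? ≠ some Letter.T}
          = Nat.fib (2 * n + 1) := by
        rw [← ihG]
        apply Nat.card_congr
        apply Equiv.subtypeEquivRight
        intro t
        simp [noGT_G_cons, and_comm]
      have e2 : Nat.card {t : List Letter //
          t.length = n ∧ NoGT (Letter.S :: t) ∧ (Letter.S :: t).head? ≠ some Letter.T}
          = Nat.fib (2 * n + 2) := by
        rw [← ihH]
        apply Nat.card_congr
        apply Equiv.subtypeEquivRight
        intro t
        simp [noGT_S_cons]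
      have e3 : Nat.card {t : List Letter //
          t.length = n ∧ NoGT (Letter.T :: t) ∧ (Letter.T :: t).head? ≠ some Letter.T} = 0 := by
        have : IsEmpty {t : List Letter //
            t.length = n ∧ NoGT (Letter.T :: t) ∧ (Letter.T :: t).head? ≠ some Letter.T} := by
          constructor; rintro ⟨t, -, -, h⟩; simp at h
        exact Nat.card_of_isEmpty
      rw [e1, e2, e3]
      have f3 : Nat.fib (2 * n + 3) = Nat.fib (2 * n + 1) + Nat.fib (2 * n + 2) := by
        rw [show 2 * n + 3 = 2 * n + 1 + 2 by omega, fib_rec,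
          show 2 * n + 1 + 1 = 2 * n + 2 by omega]
      rw [f3]; ring
    have hH : Nat.card {w : List Letter // w.length = n + 1 ∧ NoGT w}
        = Nat.fib (2 * n + 4) := by
      rw [Nat.card_congr (splitEquiv (fun w => NoGT w) n), Nat.card_sum, Nat.card_sum]
      have e1 : Nat.card {t : List Letter // t.length = n ∧ NoGT (Letter.G :: t)}
          = Nat.fib (2 * n + 1) := by
        rw [← ihG]
        apply Nat.card_congr
        apply Equiv.subtypeEquivRight
        intro t
        simp [noGT_G_cons, and_comm]
      have e2 : Nat.card {t : List Letter // t.length = n ∧ NoGT (Letter.S :: t)}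
          = Nat.fib (2 * n + 2) := by
        rw [← ihH]
        apply Nat.card_congr
        apply Equiv.subtypeEquivRight
        intro t
        simp [noGT_S_cons]
      have e3 : Nat.card {t : List Letter // t.length = n ∧ NoGT (Letter.T :: t)}
          = Nat.fib (2 * n + 2) := by
        rw [← ihH]
        apply Nat.card_congr
        apply Equiv.subtypeEquivRight
        intro t
        simp [noGT_T_cons]
      rw [e1, e2, e3]
      have f3 : Nat.fib (2 * n + 3) = Nat.fib (2 * n + 1) + Nat.fib (2 * n + 2) := by
        rw [show 2 * n + 3 = 2 * n + 1 + 2 by omega, fib_rec,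
          show 2 * n + 1 + 1 = 2 * n + 2 by omega]
      have f4 : Nat.fib (2 * n + 4) = Nat.fib (2 * n + 2) + Nat.fib (2 * n + 3) := by
        rw [show 2 * n + 4 = 2 * n + 2 + 2 by omega, fib_rec,
          show 2 * n + 2 + 1 = 2 * n + 3 by omega]
      rw [f4, f3]; ring
    constructor
    · rw [show 2 * (n + 1) + 1 = 2 * n + 3 from by ring]; exact hG
    · rw [show 2 * (n + 1) + 2 = 2 * n + 4 from by ring]; exact hH

/-- Stripping the initial `GG`. -/
def admEquiv (m : ℕ) :
    {w : List Letter // w.length = m + 2 ∧ Admissible w} ≃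
      {t : List Letter // t.length = m ∧ NoGT t ∧ t.head? ≠ some Letter.T} where
  toFun w := ⟨w.1.tail.tail, by
    obtain ⟨hl, ⟨rest, hr⟩, hc⟩ := w.2
    rw [hr] at hl hc ⊢
    have hc' : NoGT (Letter.G :: Letter.G :: rest) := hc
    rw [noGT_G_cons, noGT_G_cons] at hc'
    simp at hl
    exact ⟨hl, hc'.2.2, hc'.2.1⟩⟩
  invFun t := ⟨Letter.G :: Letter.G :: t.1, by
    obtain ⟨hl, hn, hh⟩ := t.2
    refine ⟨by simp [hl], ⟨t.1, rfl⟩, ?_⟩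
    show NoGT _
    rw [noGT_G_cons, noGT_G_cons]
    exact ⟨by simp, hh, hn⟩⟩
  left_inv w := by
    apply Subtype.ext
    obtain ⟨rest, hr⟩ := w.2.2.1
    show Letter.G :: Letter.G :: (↑w : List Letter).tail.tail = ↑w
    rw [hr]
    rfl
  right_inv t := rfl

end CardAdm

/-- The number of admissible words of length `r ≥ 2` equals `F_{2r-3}`. -/
theorem card_admissible (r : ℕ) (hr : 2 ≤ r) :
    Nat.card {w : List Letter // w.length = r ∧ Admissible w} = Nat.fib (2*r - 3) := by
  obtain ⟨m, rfl⟩ : ∃ m, r = m + 2 := ⟨r - 2, by omega⟩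
  rw [Nat.card_congr (CardAdm.admEquiv m), (CardAdm.main m).1,
    show 2 * (m + 2) - 3 = 2 * m + 1 from by omega]
end

section
/- Let l ≥ 2 and k ≥ 0. Starting from the pair of constant sequences d^{l-1} = (1,...,1) (l−1 ones) and d^{l} = (1,...,1) (l ones), applying once the operation S and then k times the operation T (each T applied to the last two sequences produced) yields the sequence (1,...,1, 2+k, ..., 2+k) consisting of 2+k ones followed by l−1 copies of 2+k. -/
/-!
Call `plateau c n` the sequence of `c` ones followed by `n` copies of `c`. The operation `S`
sends the constant sequences of lengths `n` and `n + 1` to `plateau 2 n`, and `T` sends the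
consecutive pair `(plateau c n, plateau (c + 1) n)` to `plateau (c + 2) n`, because
`2 · 1 - 1 = 1` and `2 (c + 1) - c = c + 2`. So each `T` raises the plateau by one.
-/

def opS (α β : List ℕ) : List ℕ := 1 :: 1 :: List.zipWith (· + ·) α β.tail

def opT (α β : List ℕ) : List ℕ :=
  1 :: 1 :: List.zipWith (fun a b => 2*b - a) α β.tail

/-- Pair step for the two-argument operation T: keep the last two sequences. -/
def stepT (p : List ℕ × List ℕ) : List ℕ × List ℕ := (p.2, opT p.1 p.2)

theorem List.zipWith_replicate_append_replicate {α β γ : Type*} (f : α → β → γ) (m n : ℕ)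
    (a c : α) (b d : β) :
    zipWith f (replicate m a ++ replicate n c) (replicate m b ++ replicate n d)
      = replicate m (f a b) ++ replicate n (f c d) := by
  rw [zipWith_append (by simp), zipWith_replicate, zipWith_replicate, min_self, min_self]

def plateau (c n : ℕ) : List ℕ := List.replicate c 1 ++ List.replicate n c

theorem replicate_one_eq_plateau (n : ℕ) : List.replicate (n + 1) 1 = plateau 1 n := by
  simp [plateau, List.replicate_succ]

theorem opS_replicate_one (n : ℕ) :
    opS (List.replicate n 1) (List.replicate (n + 1) 1) = plateau 2 n := by
  simp [opS, plateau, List.replicate_succ]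

theorem tail_plateau_succ (c n : ℕ) :
    (plateau (c + 1) n).tail = List.replicate c 1 ++ List.replicate n (c + 1) := by
  simp [plateau, List.replicate_succ]

theorem opT_plateau (c n : ℕ) : opT (plateau c n) (plateau (c + 1) n) = plateau (c + 2) n := by
  rw [opT, tail_plateau_succ, plateau, List.zipWith_replicate_append_replicate,
    show 2 * (c + 1) - c = c + 2 by omega, plateau, List.replicate_succ, List.replicate_succ]
  rfl

theorem iterate_stepT_plateau (c n k : ℕ) :
    stepT^[k] (plateau c n, plateau (c + 1) n) = (plateau (c + k) n, plateau (c + k + 1) n) := by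
  induction k with
  | zero => rfl
  | succ k ih =>
    rw [Function.iterate_succ_apply', ih, stepT, opT_plateau]
    rfl

/-- Starting from `d^{l-1} = (1,…,1)` and `d^l = (1,…,1)`, one S followed by `k`
T's yields `2+k` ones followed by `l−1` copies of `2+k`. -/
theorem derived_ST (l k : ℕ) (hl : 2 ≤ l) :
    (stepT^[k] (List.replicate l 1,
        opS (List.replicate (l-1) 1) (List.replicate l 1))).2
      = List.replicate (2+k) 1 ++ List.replicate (l-1) (2+k) := by
  obtain ⟨n, rfl⟩ : ∃ n, l = n + 1 := ⟨l - 1, by omega⟩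
  rw [Nat.add_sub_cancel, opS_replicate_one, replicate_one_eq_plateau,
    iterate_stepT_plateau, show 1 + k + 1 = 2 + k by omega]
  rfl
end

section
/- For every r ≥ 2, the recursion from the word G G S S ... S (with r − 2 letters S), i.e. d^1 = (1), d^2 = (1,1), and d^{j+2} = S(d^j, d^{j+1}) for 1 ≤ j ≤ r − 2, yields the sequence d^r whose i-th entry (for i = 1, ..., r, corresponding to argument i+1) is the Fibonacci number F_i (F_1 = F_2 = 1, F_{n+2} = F_n + F_{n+1}). -/
def stepS (p : List ℕ × List ℕ) : List ℕ × List ℕ := (p.2, opS p.1 p.2)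

def fibList (k : ℕ) : List ℕ := List.ofFn (fun i : Fin k => Nat.fib (i.val + 1))

lemma zipWith_ofFn (n : ℕ) (f g : ℕ → ℕ) :
    List.zipWith (· + ·) (List.ofFn (fun i : Fin n => f i.val))
      (List.ofFn (fun i : Fin n => g i.val))
      = List.ofFn (fun i : Fin n => f i.val + g i.val) := by
  induction n generalizing f g with
  | zero => simp
  | succ n ih =>
      simp only [List.ofFn_succ, List.zipWith_cons_cons, Fin.val_succ]
      rw [ih (fun k => f (k + 1)) (fun k => g (k + 1))]

lemma opS_fib (k : ℕ) : opS (fibList (k + 1)) (fibList (k + 2)) = fibList (k + 3) := by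
  unfold opS fibList
  have htail : (List.ofFn (fun i : Fin (k + 2) => Nat.fib (i.val + 1))).tail
      = List.ofFn (fun i : Fin (k + 1) => Nat.fib (i.val + 2)) := by
    rw [List.ofFn_succ]; simp
  rw [htail, zipWith_ofFn (k + 1) (fun i => Nat.fib (i + 1)) (fun i => Nat.fib (i + 2))]
  conv_rhs => rw [show (k + 3) = (k + 1) + 1 + 1 from rfl, List.ofFn_succ, List.ofFn_succ]
  simp only [Fin.val_zero, Fin.val_succ]
  congr 1
  congr 1
  apply congrArg List.ofFn
  funext i
  rw [show (i:ℕ) + 1 + 1 + 1 = ((i:ℕ)+1) + 2 from by ring]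
  rw [Nat.fib_add_two (n := (i:ℕ)+1), show (i:ℕ)+1+1 = (i:ℕ)+2 from by ring, Nat.fib_add_two (n := (i:ℕ))]

lemma step_iter (n : ℕ) :
    stepS^[n] ([1], [1, 1]) = (fibList (n + 1), fibList (n + 2)) := by
  induction n with
  | zero =>
      simp [fibList, List.ofFn_succ]
  | succ n ih =>
      rw [Function.iterate_succ_apply', ih]
      simp only [stepS]
      rw [opS_fib n]

/-- The derived vector of `G G S_{r-2}` consists of consecutive Fibonacci
numbers `F₁, F₂, …, F_r`. -/
theorem derived_GGS (r : ℕ) (hr : 2 ≤ r) :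
    (stepS^[r-2] ([1], [1, 1])).2
      = List.ofFn (fun i : Fin r => Nat.fib (i.val + 1)) := by
  rw [step_iter]
  have : r - 2 + 2 = r := Nat.sub_add_cancel hr
  rw [show fibList (r - 2 + 2) = fibList r from by rw [this]]
  rfl
end

section
/- For every r ≥ 2, the sum of the entries of the derived vector of the class G G S_{r-2} (entries F_1, F_2, ..., F_r) plus 1 equals F_{r+2}; hence the nonholonomy degree of a Goursat distribution of corank r is at most F_{r+2}. -/
/-- The sum of the entries `F₁, …, F_r` of the derived vector of `GGS_{r-2}`,
plus 1, equals `F_{r+2}`: the maximal nonholonomy degree in corank `r`. -/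
theorem nonholonomy_degree_max (r : ℕ) (hr : 2 ≤ r) :
    1 + (List.ofFn (fun i : Fin r => Nat.fib (i.val + 1))).sum = Nat.fib (r+2) := by
  clear hr
  induction r with
  | zero => simp
  | succ n ih =>
    rw [List.ofFn_succ', List.concat_eq_append, List.sum_append, Nat.fib_add_two (n := n + 1)]
    simp only [Fin.coe_castSucc, Fin.val_last, List.sum_cons, List.sum_nil] at *; rw [show n+1+1 = n+2 from rfl] at *; omega
end

section
/- Let w_0 be a positive integer and m_0 ≥ 1. Starting from the pair of sequences α = (w_0, ..., w_0) (m_0 copies) and β = (1, w_0, ..., w_0) (a 1 followed by m_0 copies of w_0), apply the operations S, then T^{k_0}, then G^{l_0} (each two-argument operation applied to the last two sequences produced). The result consists of 2 + k_0 + l_0 entries equal to 1 followed by m_0 entries equal to (2 + k_0)·w_0. -/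
/-!
After `S` the last two sequences are `1, w^m` and `1, 1, (2w)^m`. On pairs of the shape
`1^(j+1), a^m` and `1^(j+2), b^m`, the entrywise rule `2b - a` of `T` keeps the ones and
continues the arithmetic progression `a, b`, so each `T` adds one `1` and one more `w` to the
tail value; each `G` then only prepends a `1`.
-/

open List

def opG (α : List ℕ) : List ℕ := 1 :: α

def stepG (p : List ℕ × List ℕ) : List ℕ × List ℕ := (p.2, opG p.2)
lemma opS_replicate (m a b c : ℕ) :
    opS (replicate m a) (c :: replicate m b) = replicate 2 1 ++ replicate m (a + b) := by
  simp [opS, zipWith_replicate']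

lemma opT_replicate (i m a b : ℕ) :
    opT (replicate i 1 ++ replicate m a) (replicate (i + 1) 1 ++ replicate m b)
      = replicate (i + 2) 1 ++ replicate m (2 * b - a) := by
  simp [opT, replicate_succ, zipWith_append, zipWith_replicate']

lemma stepG_iterate_snd (l : ℕ) (p : List ℕ × List ℕ) :
    (stepG^[l] p).2 = replicate l 1 ++ p.2 := by
  induction l generalizing p with
  | zero => rfl
  | succ l ih => simp [Function.iterate_succ_apply, ih, stepG, opG, replicate_succ']

def staircase (m w j : ℕ) : List ℕ := replicate (j + 1) 1 ++ replicate m ((j + 1) * w)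

lemma stepT_staircase (m w j : ℕ) :
    stepT (staircase m w j, staircase m w (j + 1))
      = (staircase m w (j + 1), staircase m w (j + 2)) := by
  have progression : 2 * ((j + 2) * w) - (j + 1) * w = (j + 3) * w := by
    exact Nat.sub_eq_of_eq_add (by ring)
  simp only [stepT, staircase, opT_replicate, progression]

lemma stepT_iterate_staircase (m w k : ℕ) :
    stepT^[k] (staircase m w 0, staircase m w 1) = (staircase m w k, staircase m w (k + 1)) := by
  have semiconj : Function.Semiconj (fun j => (staircase m w j, staircase m w (j + 1)))
      Nat.succ stepT := fun j => (stepT_staircase m w j).symm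
  simpa [Nat.succ_iterate] using (semiconj.iterate_right k 0).symm

theorem corollary_n_one_general (w₀ m₀ k₀ l₀ : ℕ) :
    (stepG^[l₀] (stepT^[k₀] (stepS
        (List.replicate m₀ w₀, 1 :: List.replicate m₀ w₀)))).2
      = List.replicate (2+k₀+l₀) 1 ++ List.replicate m₀ ((2+k₀) * w₀) := by
  have after_S : stepS (replicate m₀ w₀, 1 :: replicate m₀ w₀)
      = (staircase m₀ w₀ 0, staircase m₀ w₀ 1) := by
    simp [stepS, opS_replicate, staircase, two_mul]
  rw [after_S, stepT_iterate_staircase, stepG_iterate_snd]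
  simp only [staircase, ← append_assoc, ← replicate_add]
  congr 2 <;> ring

/-- Starting from `α = (w₀,…,w₀)` (`m₀` copies) and `β = (1,w₀,…,w₀)`, the
operations `S, T^{k₀}, G^{l₀}` produce `2+k₀+l₀` ones followed by `m₀` copies
of `(2+k₀)·w₀`. -/
theorem corollary_n_one (w₀ m₀ k₀ l₀ : ℕ) (hw : 1 ≤ w₀) (hm : 1 ≤ m₀) :
    (stepG^[l₀] (stepT^[k₀] (stepS
        (List.replicate m₀ w₀, 1 :: List.replicate m₀ w₀)))).2
      = List.replicate (2+k₀+l₀) 1 ++ List.replicate m₀ ((2+k₀) * w₀) :=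
  corollary_n_one_general w₀ m₀ k₀ l₀
end

section
/- Every derived vector d^r produced by Jean's recursion from an admissible word (starting d^1 = (1), d^2 = (1,1), and applying at each step G, S, or T according to the next letter, where the letter after a G is never T) is a non-decreasing sequence of positive integers beginning with 1. -/
/-- One step of Jean's recursion: keep the last two derived vectors. -/
def step (p : List ℕ × List ℕ) : Letter → List ℕ × List ℕ
  | Letter.G => (p.2, opG p.2)
  | Letter.S => (p.2, opS p.1 p.2)
  | Letter.T => (p.2, opT p.1 p.2)

/-!
Encode the last two derived vectors as `(α, 1 :: γ)` with `γ = α + δ`, i.e. by the list of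
pairs `(αᵢ, δᵢ)`. Then `G`, `S`, `T` act on `(α, δ)` as `(1 :: γ, 0)`, `(1 :: γ, 0 :: α)` and
`(1 :: γ, 0 :: δ)`; for `T` this uses `2γ - α = γ + δ`, so the truncated subtraction never
truncates. Hence "`α` and `δ` non-decreasing (the list of pairs sorted in the product order) and
`γ` positive" is invariant, and it makes the derived vector `1 :: γ` non-decreasing and positive.
-/

def jeanPair (l : List (ℕ × ℕ)) : List ℕ × List ℕ :=
  (l.map Prod.fst, 1 :: l.map fun p => p.1 + p.2)

def liftStep (l : List (ℕ × ℕ)) : Letter → List (ℕ × ℕ)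
  | .G => (jeanPair l).2.map fun x => (x, 0)
  | .S => (1, 0) :: l.map fun p => (p.1 + p.2, p.1)
  | .T => (1, 0) :: l.map fun p => (p.1 + p.2, p.2)

theorem step_jeanPair (l : List (ℕ × ℕ)) (a : Letter) :
    step (jeanPair l) a = jeanPair (liftStep l a) := by
  cases a <;> simp [step, jeanPair, liftStep, opG, opS, opT, List.zipWith_map, List.zipWith_self] <;>
    omega

theorem foldl_step_jeanPair (w : List Letter) (l : List (ℕ × ℕ)) :
    w.foldl step (jeanPair l) = jeanPair (w.foldl liftStep l) :=
  List.foldl_hom jeanPair step_jeanPair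

def IsJeanInvariant (l : List (ℕ × ℕ)) : Prop :=
  l.Pairwise (· ≤ ·) ∧ ∀ p ∈ l, 0 < p.1 + p.2

namespace IsJeanInvariant

variable {l : List (ℕ × ℕ)}

theorem pos_of_mem_snd_jeanPair (h : IsJeanInvariant l) {x : ℕ} (hx : x ∈ (jeanPair l).2) :
    0 < x := by
  simp only [jeanPair, List.mem_cons, List.mem_map] at hx
  rcases hx with rfl | ⟨p, hp, rfl⟩
  · exact Nat.one_pos
  · exact h.2 p hp

theorem pairwise_snd_jeanPair (h : IsJeanInvariant l) : (jeanPair l).2.Pairwise (· ≤ ·) :=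
  List.pairwise_cons.2
    ⟨List.forall_mem_map.2 h.2, h.1.map _ fun _ _ hpq => add_le_add hpq.1 hpq.2⟩

theorem cons_map (h : IsJeanInvariant l) {f : ℕ × ℕ → ℕ × ℕ} (hf : Monotone f)
    (hf_fst : ∀ p, (f p).1 = p.1 + p.2) : IsJeanInvariant ((1, 0) :: l.map f) := by
  have hf_fst_pos : ∀ p ∈ l, 0 < (f p).1 := fun p hp => hf_fst p ▸ h.2 p hp
  refine ⟨List.pairwise_cons.2 ⟨?_, h.1.map f fun _ _ => @hf _ _⟩, ?_⟩
  · simp only [List.forall_mem_map]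
    exact fun p hp => Prod.mk_le_mk.2 ⟨hf_fst_pos p hp, Nat.zero_le _⟩
  · simp only [List.forall_mem_cons, List.forall_mem_map]
    exact ⟨Nat.one_pos, fun p hp => (hf_fst_pos p hp).trans_le (Nat.le_add_right _ _)⟩

theorem liftStep (h : IsJeanInvariant l) (a : Letter) : IsJeanInvariant (liftStep l a) := by
  cases a with
  | G =>
    refine ⟨h.pairwise_snd_jeanPair.map _ fun _ _ hxy => Prod.mk_le_mk.2 ⟨hxy, le_rfl⟩, ?_⟩
    exact List.forall_mem_map.2 fun _ hx => h.pos_of_mem_snd_jeanPair hx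
  | S =>
    exact h.cons_map (fun _ _ hpq => Prod.mk_le_mk.2 ⟨add_le_add hpq.1 hpq.2, hpq.1⟩) fun _ => rfl
  | T =>
    exact h.cons_map (fun _ _ hpq => Prod.mk_le_mk.2 ⟨add_le_add hpq.1 hpq.2, hpq.2⟩) fun _ => rfl

theorem foldl_liftStep (h : IsJeanInvariant l) (w : List Letter) :
    IsJeanInvariant (w.foldl _root_.liftStep l) := by
  induction w generalizing l with
  | nil => exact h
  | cons a w ih => exact ih (h.liftStep a)

end IsJeanInvariant

theorem isJeanInvariant_singleton : IsJeanInvariant [(1, 0)] :=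
  ⟨List.pairwise_singleton _ _, by simp⟩

theorem derived_vector_monotone_pos_general (w : List Letter) :
    (w.foldl step ([1], [1, 1])).2.Chain' (· ≤ ·) ∧
    (∀ x ∈ (w.foldl step ([1], [1, 1])).2, 0 < x) ∧
    (w.foldl step ([1], [1, 1])).2.head? = some 1 := by
  have hinv := isJeanInvariant_singleton.foldl_liftStep w
  rw [show (([1], [1, 1]) : List ℕ × List ℕ) = jeanPair [(1, 0)] from rfl, foldl_step_jeanPair]
  exact ⟨hinv.pairwise_snd_jeanPair.isChain, fun _ => hinv.pos_of_mem_snd_jeanPair, rfl⟩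

/-- Every derived vector produced by Jean's recursion from an admissible word
(`GG…`, no factor `GT`) is a non-decreasing sequence of positive integers
beginning with 1. -/
theorem derived_vector_monotone_pos (w : List Letter)
    (hadm : (Letter.G :: Letter.G :: w).Chain'
      (fun a b => ¬(a = Letter.G ∧ b = Letter.T))) :
    (w.foldl step ([1], [1, 1])).2.Chain' (· ≤ ·) ∧
    (∀ x ∈ (w.foldl step ([1], [1, 1])).2, 0 < x) ∧
    (w.foldl step ([1], [1, 1])).2.head? = some 1 :=
  derived_vector_monotone_pos_general w
end
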